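/- arXiv:1506.00944 — 2 statements merged into one kernel-verified Lean document; each statement's English description precedes it below -/
import Mathlib

section
/- Let ℓ ≥ 2 and let G be a finite simple graph. Then G is a K_ℓ-cluster graph if and only if G contains no induced subgraph isomorphic to P4 (the chordless path on 4 vertices), to the paw (the complement of P3 ∪ K1, i.e., a triangle with one pendant vertex attached), or to K_{ℓ+1} (the complete graph on ℓ+1 vertices). -/
/-! Inside a connected component, being an `ℓ`-clique means that non-adjacency is an equivalence
relation (the component is complete multipartite) with at most `ℓ` classes, i.e. there is no
clique on `ℓ + 1` vertices. The three forbidden graphs are connected, so each would lie inside a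
single component; `P4` and the paw contain an edge together with a vertex adjacent to neither of
its ends, which breaks transitivity of non-adjacency, and `K_{ℓ+1}` has too many classes.
Conversely, in a connected `P4`-free graph two non-adjacent vertices have a common neighbour.
If `y ≁ x`, `y ≁ z` and `x ~ z`, a common neighbour `u` of `x` and `y` spans a paw with `x, z, y`
when `u ~ z`, and the induced path `y u x z` otherwise. -/

open SimpleGraph

variable {V : Type*}

/-- The graph obtained from `G` by applying the edition set `F`
(symmetric difference of the edge set with `F`). -/
def editGraph (G : SimpleGraph V) (F : Finset (Sym2 V)) : SimpleGraph V :=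
  SimpleGraph.fromEdgeSet (symmDiff G.edgeSet (F : Set (Sym2 V)))

/-- An edition set is a finite set of unordered pairs of *distinct* vertices. -/
def IsEditionSet (F : Finset (Sym2 V)) : Prop := ∀ e ∈ F, ¬ e.IsDiag

/-- `S` induces in `G` an `ℓ`-clique: a connected complete (at most) `ℓ`-partite graph,
i.e. `S` splits into at most `ℓ` independent sets with all edges present between
different parts, and the induced subgraph is connected. -/
def IsEllCliqueOn (ℓ : ℕ) (G : SimpleGraph V) (S : Set V) : Prop :=
  (G.induce S).Connected ∧
  ∃ f : V → Fin ℓ, ∀ x ∈ S, ∀ y ∈ S, x ≠ y → (G.Adj x y ↔ f x ≠ f y)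

/-- A cluster graph: every connected component is a clique. -/
def IsCluster (G : SimpleGraph V) : Prop :=
  ∀ c : G.ConnectedComponent, G.IsClique c.supp

/-- A `K_ℓ`-cluster graph: every connected component is an `ℓ`-clique. -/
def IsKlCluster (ℓ : ℕ) (G : SimpleGraph V) : Prop :=
  ∀ c : G.ConnectedComponent, IsEllCliqueOn ℓ G c.supp

/-- An `L`-cluster graph: every connected component is a clique or an `ℓ`-clique. -/
def IsLCluster (ℓ : ℕ) (G : SimpleGraph V) : Prop :=
  ∀ c : G.ConnectedComponent, G.IsClique c.supp ∨ IsEllCliqueOn ℓ G c.supp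

/-- `G` contains an induced subgraph isomorphic to `H`. -/
def Contains {W : Type*} (H : SimpleGraph W) (G : SimpleGraph V) : Prop :=
  Nonempty (H ↪g G)

/-- The paw: a triangle with a pendant vertex (the complement of `P3 ∪ K1`). -/
def paw : SimpleGraph (Fin 4) :=
  SimpleGraph.fromEdgeSet {s(0,1), s(0,2), s(1,2), s(0,3)}

/-- The complete graph on `ℓ + 2` vertices minus one edge. -/
def completeMinusEdge (ℓ : ℕ) : SimpleGraph (Fin (ℓ + 2)) where
  Adj x y := x ≠ y ∧ s(x,y) ≠ s((0 : Fin (ℓ + 2)), 1)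
  symm := ⟨by
    rintro x y ⟨h1, h2⟩
    exact ⟨h1.symm, by rwa [Sym2.eq_swap]⟩⟩
  loopless := ⟨fun x h => h.1 rfl⟩

/-- The graph `G̃` on `V × {1,…,ℓ}`: `(u,p)` is adjacent to `(v,q)` iff `p ≠ q` and
(`u = v` or `uv ∈ E(G)`). -/
def tilde (ℓ : ℕ) (G : SimpleGraph V) : SimpleGraph (V × Fin ℓ) where
  Adj a b := a.2 ≠ b.2 ∧ (a.1 = b.1 ∨ G.Adj a.1 b.1)
  symm := ⟨fun _ _ h => ⟨h.1.symm, h.2.imp Eq.symm (fun h' => h'.symm)⟩⟩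
  loopless := ⟨fun _ h => h.1 rfl⟩

/-- `x` and `y` are twins in `G`: they are distinct and every other vertex is adjacent
to `x` iff it is adjacent to `y`. -/
def IsTwinPair (G : SimpleGraph V) (x y : V) : Prop :=
  x ≠ y ∧ ∀ z, z ≠ x → z ≠ y → (G.Adj z x ↔ G.Adj z y)

/-- The twin class of a vertex. -/
def twinClass (G : SimpleGraph V) (v : V) : Set V :=
  {w | w = v ∨ IsTwinPair G v w}

/-- The set of twin classes of `G`. -/
def twinClasses (G : SimpleGraph V) : Set (Set V) :=
  Set.range (twinClass G)

/-- The number of U-vertices of `G_Q` (singleton twin classes). -/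
noncomputable def Ucount (G : SimpleGraph V) : ℕ :=
  {C ∈ twinClasses G | C.Subsingleton}.ncard

/-- The number of P-vertices of `G_Q` (twin classes of size ≥ 2 of pairwise false twins). -/
noncomputable def Pcount (G : SimpleGraph V) : ℕ :=
  {C ∈ twinClasses G | 2 ≤ C.ncard ∧ ∀ x ∈ C, ∀ y ∈ C, x ≠ y → ¬ G.Adj x y}.ncard

/-- The number of S-vertices of `G_Q` (twin classes of size ≥ 2 of pairwise true twins). -/
noncomputable def Scount (G : SimpleGraph V) : ℕ :=
  {C ∈ twinClasses G | 2 ≤ C.ncard ∧ ∀ x ∈ C, ∀ y ∈ C, x ≠ y → G.Adj x y}.ncard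

/-- The total number of twin classes of `G` (vertices of the Q-quotient graph `G_Q`). -/
noncomputable def Qcount (G : SimpleGraph V) : ℕ :=
  (twinClasses G).ncard

/-- The edition set `F̃ = { {(u,p),(v,q)} : {u,v} ∈ F, p ≠ q }` on `V × {1,…,ℓ}`. -/
def liftEdition [Fintype V] [DecidableEq V] (ℓ : ℕ) (F : Finset (Sym2 V)) :
    Finset (Sym2 (V × Fin ℓ)) :=
  Finset.univ.filter (fun e => ∃ (u v : V) (p q : Fin ℓ),
    p ≠ q ∧ s(u,v) ∈ F ∧ e = s((u,p),(v,q)))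

lemma nonempty_embedding_fin_or_fin_succ_embedding (α : Type*) (n : ℕ) :
    Nonempty (α ↪ Fin n) ∨ Nonempty (Fin (n + 1) ↪ α) := by
  rcases finite_or_infinite α with hα | hα
  · have := Fintype.ofFinite α
    rcases le_or_gt (Fintype.card α) n with h | h
    · exact .inl (Function.Embedding.nonempty_of_card_le (by simpa using h))
    · exact .inr (Function.Embedding.nonempty_of_card_le (by simpa using h))
  · exact .inr ⟨Fin.valEmbedding.trans (Infinite.natEmbedding α)⟩

namespace SimpleGraph

variable {α β : Type*} {H : SimpleGraph α}

lemma isCompleteMultipartite_comap_top (f : α → β) :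
    ((⊤ : SimpleGraph β).comap f).IsCompleteMultipartite :=
  ⟨fun x y z hxy hyz => by simp_all⟩

lemma cliqueFree_comap_top {n : ℕ} (f : α → Fin n) :
    ((⊤ : SimpleGraph (Fin n)).comap f).CliqueFree (n + 1) := by
  intro s hs
  have := Finset.card_le_card_of_injOn f (fun _ _ => Finset.mem_univ _)
    fun x hx y hy hxy => by_contra fun hne => hs.isClique hx hy hne hxy
  simp [hs.card_eq] at this

lemma IsCompleteMultipartite.exists_eq_comap_top {n : ℕ} (h : H.IsCompleteMultipartite)
    (hc : H.CliqueFree (n + 1)) : ∃ f : α → Fin n, H = (⊤ : SimpleGraph (Fin n)).comap f := by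
  let parts : completeGraph (Quotient h.setoid) ↪g H :=
    ⟨⟨Quotient.out, Quotient.out_injective⟩, fun {p q} => by
      rw [top_adj, ne_eq, ← Quotient.out_equiv_out]
      exact not_not.symm⟩
  rcases nonempty_embedding_fin_or_fin_succ_embedding (Quotient h.setoid) n with ⟨⟨g⟩⟩ | ⟨⟨e⟩⟩
  · refine ⟨g ∘ Quotient.mk _, ?_⟩
    ext x y
    rw [comap_adj, top_adj, Function.comp_apply, Function.comp_apply, g.injective.ne_iff, ne_eq,
      Quotient.eq]
    exact not_not.symm
  · exact absurd hc (parts.comp (Embedding.completeGraph e)).isContained.not_cliqueFree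

lemma exists_eq_comap_top_iff {n : ℕ} :
    (∃ f : α → Fin n, H = (⊤ : SimpleGraph (Fin n)).comap f) ↔
      H.IsCompleteMultipartite ∧ H.CliqueFree (n + 1) := by
  refine ⟨?_, fun h => h.1.exists_eq_comap_top h.2⟩
  rintro ⟨f, rfl⟩
  exact ⟨isCompleteMultipartite_comap_top f, cliqueFree_comap_top f⟩

lemma not_isCompleteMultipartite_pathGraph_four : ¬(pathGraph 4).IsCompleteMultipartite :=
  not_isCompleteMultipartite_iff_exists_isPathGraph3Compl.2
    ⟨3, 0, 1, ⟨by simp [pathGraph_adj], by simp [pathGraph_adj], by simp [pathGraph_adj]⟩⟩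

end SimpleGraph

section Forbidden

variable {W : Type*} {G : SimpleGraph V}

lemma paw_connected : paw.Connected := by
  refine (connected_iff_exists_forall_reachable _).2 ⟨0, fun v => ?_⟩
  fin_cases v
  · rfl
  all_goals exact Adj.reachable (by simp [paw])

lemma not_isCompleteMultipartite_paw : ¬paw.IsCompleteMultipartite :=
  not_isCompleteMultipartite_iff_exists_isPathGraph3Compl.2
    ⟨3, 1, 2, ⟨by simp [paw], by simp [paw], by simp [paw]⟩⟩

lemma contains_pathGraph_four {a b c d : V} (hab : G.Adj a b) (hbc : G.Adj b c)
    (hcd : G.Adj c d) (hac : ¬G.Adj a c) (had : ¬G.Adj a d) (hbd : ¬G.Adj b d)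
    (hac' : a ≠ c) (had' : a ≠ d) (hbd' : b ≠ d) :
    Contains (pathGraph 4) G := by
  have := hab.ne; have := hbc.ne; have := hcd.ne
  have := hab.symm; have := hbc.symm; have := hcd.symm
  have := mt G.adj_symm hac; have := mt G.adj_symm had; have := mt G.adj_symm hbd
  refine ⟨⟨⟨![a, b, c, d], fun i j hij => ?_⟩, fun {i j} => ?_⟩⟩
  · fin_cases i <;> fin_cases j <;> simp_all [eq_comm]
  · change G.Adj (![a, b, c, d] i) (![a, b, c, d] j) ↔ _
    fin_cases i <;> fin_cases j <;> simp_all [pathGraph_adj]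

lemma contains_paw {a b c d : V} (hab : G.Adj a b) (hac : G.Adj a c) (hbc : G.Adj b c)
    (had : G.Adj a d) (hbd : ¬G.Adj b d) (hcd : ¬G.Adj c d) (hbd' : b ≠ d) (hcd' : c ≠ d) :
    Contains paw G := by
  have := hab.ne; have := hac.ne; have := hbc.ne; have := had.ne
  have := hab.symm; have := hac.symm; have := hbc.symm; have := had.symm
  have := mt G.adj_symm hbd; have := mt G.adj_symm hcd
  refine ⟨⟨⟨![a, b, c, d], fun i j hij => ?_⟩, fun {i j} => ?_⟩⟩
  · fin_cases i <;> fin_cases j <;> simp_all [eq_comm]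
  · change G.Adj (![a, b, c, d] i) (![a, b, c, d] j) ↔ _
    fin_cases i <;> fin_cases j <;> simp_all [paw]

lemma Contains.exists_connectedComponent {H : SimpleGraph W} (hH : H.Connected)
    (h : Contains H G) : ∃ c : G.ConnectedComponent, Contains H (G.induce c.supp) := by
  obtain ⟨φ⟩ := h
  obtain ⟨w⟩ := hH.nonempty
  have hmem (x : W) : φ x ∈ (G.connectedComponentMk (φ w)).supp :=
    ConnectedComponent.sound ((hH.preconnected x w).map φ.toHom)
  exact ⟨_, ⟨⟨⟨fun x => ⟨φ x, hmem x⟩, fun x y hxy => φ.injective (congrArg Subtype.val hxy)⟩,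
    φ.map_adj_iff⟩⟩⟩

lemma cliqueFree_of_not_contains {n : ℕ} (h : ¬Contains (completeGraph (Fin n)) G) :
    G.CliqueFree n :=
  by_contra fun hG => h ⟨topEmbeddingOfNotCliqueFree hG⟩

lemma exists_adj_adj_of_reachable (hP4 : ¬Contains (pathGraph 4) G) {a b : V}
    (h : G.Reachable a b) (hne : a ≠ b) (hnadj : ¬G.Adj a b) : ∃ v, G.Adj a v ∧ G.Adj v b := by
  obtain ⟨w⟩ := h
  induction w with
  | nil => exact absurd rfl hne
  | @cons a x b hax p ih =>
    by_cases hxb : x = b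
    · exact absurd (hxb ▸ hax) hnadj
    by_cases hxb' : G.Adj x b
    · exact ⟨x, hax, hxb'⟩
    obtain ⟨v, hxv, hvb⟩ := ih hxb hxb'
    by_cases hav : G.Adj a v
    · exact ⟨v, hav, hvb⟩
    · exact absurd (contains_pathGraph_four hax hxv hvb hav hnadj hxb'
        (fun h => hnadj (h ▸ hvb)) hne hxb) hP4

lemma SimpleGraph.Connected.isCompleteMultipartite (hG : G.Connected)
    (hP4 : ¬Contains (pathGraph 4) G) (hpaw : ¬Contains paw G) : G.IsCompleteMultipartite := by
  by_contra h
  obtain ⟨y, x, z, hxz, hyx, hyz⟩ := exists_isPathGraph3Compl_of_not_isCompleteMultipartite h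
  have hyx' : y ≠ x := fun h => hyz (h ▸ hxz)
  have hyz' : y ≠ z := fun h => hyx (h ▸ hxz.symm)
  obtain ⟨u, hyu, hux⟩ := exists_adj_adj_of_reachable hP4 (hG.preconnected y x) hyx' hyx
  by_cases huz : G.Adj u z
  · exact hpaw (contains_paw hux huz hxz hyu.symm (mt G.adj_symm hyx) (mt G.adj_symm hyz)
      hyx'.symm hyz'.symm)
  · exact hP4 (contains_pathGraph_four hyu hux hxz hyx hyz huz hyx' hyz'
      fun h => hyz (h ▸ hyu))

end Forbidden

section KlCluster

variable {ℓ : ℕ} {G : SimpleGraph V}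

lemma isEllCliqueOn_iff {S : Set V} : IsEllCliqueOn ℓ G S ↔
    (G.induce S).Connected ∧ ∃ f : S → Fin ℓ, G.induce S = (⊤ : SimpleGraph (Fin ℓ)).comap f := by
  refine and_congr_right fun hS => ⟨fun ⟨f, hf⟩ => ⟨f ∘ Subtype.val, ?_⟩, fun ⟨f, hf⟩ => ?_⟩
  · ext x y
    by_cases hxy : x = y
    · simp [hxy]
    · exact hf x x.2 y y.2 (Subtype.val_injective.ne hxy)
  · obtain ⟨s⟩ := hS.nonempty
    refine ⟨Function.extend Subtype.val f fun _ => f s, fun x hx y hy hxy => ?_⟩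
    rw [Subtype.val_injective.extend_apply f _ ⟨x, hx⟩,
      Subtype.val_injective.extend_apply f _ ⟨y, hy⟩]
    exact congrArg (·.Adj ⟨x, hx⟩ ⟨y, hy⟩) hf |>.to_iff

lemma isKlCluster_iff : IsKlCluster ℓ G ↔ ∀ c : G.ConnectedComponent,
    (G.induce c.supp).IsCompleteMultipartite ∧ (G.induce c.supp).CliqueFree (ℓ + 1) := by
  refine forall_congr' fun c => ?_
  rw [isEllCliqueOn_iff, ← exists_eq_comap_top_iff]
  exact and_iff_right c.maximal_connected_induce_supp.1

end KlCluster

theorem klCluster_iff_forbidden_general (ℓ : ℕ) (G : SimpleGraph V) :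
    IsKlCluster ℓ G ↔
      ¬ Contains (SimpleGraph.pathGraph 4) G ∧ ¬ Contains paw G ∧
        ¬ Contains (completeGraph (Fin (ℓ + 1))) G := by
  rw [isKlCluster_iff]
  constructor
  · intro hG
    refine ⟨fun h => ?_, fun h => ?_, fun h => ?_⟩
    · obtain ⟨c, ⟨φ⟩⟩ := h.exists_connectedComponent (pathGraph_connected 3)
      exact not_isCompleteMultipartite_pathGraph_four ((hG c).1.comap φ)
    · obtain ⟨c, ⟨φ⟩⟩ := h.exists_connectedComponent paw_connected
      exact not_isCompleteMultipartite_paw ((hG c).1.comap φ)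
    · obtain ⟨c, ⟨φ⟩⟩ := h.exists_connectedComponent connected_top
      exact φ.isContained.not_cliqueFree (hG c).2
  · rintro ⟨hP4, hpaw, hK⟩ c
    exact ⟨c.maximal_connected_induce_supp.1.isCompleteMultipartite
        (fun ⟨φ⟩ => hP4 ⟨(Embedding.induce _).comp φ⟩)
        (fun ⟨φ⟩ => hpaw ⟨(Embedding.induce _).comp φ⟩),
      (cliqueFree_of_not_contains hK).comap (Embedding.induce _).isContained⟩

/-- `G` is a `K_ℓ`-cluster graph iff it contains no induced `P4`, no induced paw,
and no induced `K_{ℓ+1}`. -/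
theorem klCluster_iff_forbidden [Fintype V] (ℓ : ℕ) (hℓ : 2 ≤ ℓ) (G : SimpleGraph V) :
    IsKlCluster ℓ G ↔
      ¬ Contains (SimpleGraph.pathGraph 4) G ∧ ¬ Contains paw G ∧
        ¬ Contains (completeGraph (Fin (ℓ + 1))) G :=
  klCluster_iff_forbidden_general ℓ G
end

section
/- Let ℓ ≥ 2 and let G be a finite simple graph none of whose connected components is a clique or an ℓ-clique. If there exists an edition set F for G with |F| = 1 such that G+F is an L-cluster graph, then Q(G) ≤ 2ℓ+2, P(G) ≤ 2ℓ, and S(G) ≤ 2. -/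
open SimpleGraph

variable {V : Type*}

/-!
Let `H` be `G` with the pair `ab` flipped. A component of `H` missing both `a` and `b` would also
be a component of `G`, so every vertex of `H` is reachable from `a` or from `b`. In a clique or an
`ℓ`-clique every part lies inside one twin class, so a component carries at most `ℓ` twin classes,
and all vertices of a component having a true twin form a single twin class. Away from `a` and `b`
the twin relation is the same in `G` and `H`, so at most `2ℓ` twin classes of `G` meet
`V ∖ {a, b}`: this gives `Q ≤ 2ℓ + 2`, and `P ≤ 2ℓ` because a P-class `{a, b}` makes `ab` an edge
of `H`, which is then connected. Finally at most one S-class meets `{a, b}`, its existence again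
makes `H` connected, and any other S-class is determined by the component of `H` holding it.
-/

theorem Set.ncard_image_le_ncard_image_of_eq {α β γ : Type*} {s : Set α} {f : α → β}
    {g : α → γ} (hs : (f '' s).Finite) (h : ∀ x ∈ s, ∀ y ∈ s, f x = f y → g x = g y) :
    (g '' s).ncard ≤ (f '' s).ncard := by
  rcases s.eq_empty_or_nonempty with rfl | ⟨x₀, -⟩
  · simp
  have : Nonempty α := ⟨x₀⟩
  have hinv : ∀ x ∈ s, Function.invFunOn g s (g x) ∈ s ∧ g (Function.invFunOn g s (g x)) = g x :=
    fun x hx => Function.invFunOn_pos ⟨x, hx, rfl⟩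
  refine Set.ncard_le_ncard_of_injOn (fun c => f (Function.invFunOn g s c)) ?_ ?_ hs
  · rintro _ ⟨x, hx, rfl⟩
    exact Set.mem_image_of_mem f (hinv x hx).1
  · rintro _ ⟨x, hx, rfl⟩ _ ⟨y, hy, rfl⟩ hxy
    rw [← (hinv x hx).2, ← (hinv y hy).2]
    exact h _ (hinv x hx).1 _ (hinv y hy).1 hxy

theorem SimpleGraph.Reachable.mem_of_forall_adj_mem {G : SimpleGraph V} {S : Set V} {x y : V}
    (hS : ∀ u ∈ S, ∀ w, G.Adj u w → w ∈ S) (h : G.Reachable x y) (hx : x ∈ S) : y ∈ S := by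
  rw [reachable_eq_reflTransGen] at h
  induction h with
  | refl => exact hx
  | tail _ hadj ih => exact hS _ ih _ hadj

def HasTrueTwin (G : SimpleGraph V) (x : V) : Prop :=
  ∃ y, IsTwinPair G x y ∧ G.Adj x y

section Twins

variable {G : SimpleGraph V} {x y z : V}

theorem IsTwinPair.symm (h : IsTwinPair G x y) : IsTwinPair G y x :=
  ⟨h.1.symm, fun w hwy hwx => (h.2 w hwx hwy).symm⟩

theorem IsTwinPair.trans (hxy : IsTwinPair G x y) (hyz : IsTwinPair G y z) (hxz : x ≠ z) :
    IsTwinPair G x z := by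
  refine ⟨hxz, fun w hwx hwz => ?_⟩
  rcases eq_or_ne w y with rfl | hwy
  · calc G.Adj w x ↔ G.Adj x w := G.adj_comm _ _
      _ ↔ G.Adj x z := hyz.2 x hxy.1 hxz
      _ ↔ G.Adj z x := G.adj_comm _ _
      _ ↔ G.Adj z w := hxy.2 z hxz.symm hyz.1.symm
      _ ↔ G.Adj w z := G.adj_comm _ _
  · exact (hxy.2 w hwx hwy).trans (hyz.2 w hwy hwz)

theorem mem_twinClass_self (G : SimpleGraph V) (x : V) : x ∈ twinClass G x :=
  Or.inl rfl

theorem mem_twinClass_comm : y ∈ twinClass G x ↔ x ∈ twinClass G y := by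
  constructor <;> rintro (rfl | h)
  exacts [Or.inl rfl, Or.inr h.symm, Or.inl rfl, Or.inr h.symm]

theorem mem_twinClass_trans (hxy : y ∈ twinClass G x) (hyz : z ∈ twinClass G y) :
    z ∈ twinClass G x := by
  rcases hxy with rfl | hxy
  · exact hyz
  rcases hyz with rfl | hyz
  · exact Or.inr hxy
  rcases eq_or_ne z x with rfl | hzx
  · exact Or.inl rfl
  · exact Or.inr (hxy.trans hyz hzx.symm)

theorem twinClass_eq_iff : twinClass G x = twinClass G y ↔ y ∈ twinClass G x := by
  refine ⟨fun h => h ▸ mem_twinClass_self G y, fun h => Set.ext fun w => ?_⟩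
  exact ⟨mem_twinClass_trans (mem_twinClass_comm.1 h), mem_twinClass_trans h⟩

theorem eq_twinClass_of_mem {C : Set V} (hC : C ∈ twinClasses G) (hx : x ∈ C) :
    C = twinClass G x := by
  obtain ⟨v, rfl⟩ := hC
  exact twinClass_eq_iff.2 hx

theorem hasTrueTwin_of_mem {C : Set V} (hC : C ∈ twinClasses G) (h2 : 2 ≤ C.ncard)
    (hadj : ∀ x ∈ C, ∀ y ∈ C, x ≠ y → G.Adj x y) (hx : x ∈ C) : HasTrueTwin G x := by
  obtain ⟨y, hy, hyx⟩ := Set.exists_ne_of_one_lt_ncard h2 x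
  have hy' : y ∈ twinClass G x := eq_twinClass_of_mem hC hx ▸ hy
  exact ⟨y, hy'.resolve_left hyx, hadj x hx y hy hyx.symm⟩

theorem IsTwinPair.exists_common_adj (htw : IsTwinPair G x y)
    (hadj : G.Adj x y) (hc : ¬ G.IsClique (G.connectedComponentMk x).supp) :
    ∃ z, z ≠ x ∧ z ≠ y ∧ G.Adj z x ∧ G.Adj z y := by
  by_contra! hno
  refine hc ((isClique_pair.2 fun _ => hadj).subset fun w hw => ?_)
  refine (ConnectedComponent.exact hw).symm.mem_of_forall_adj_mem ?_ (Set.mem_insert x _)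
  rintro u hu w huw
  by_contra hw
  simp only [Set.mem_insert_iff, Set.mem_singleton_iff, not_or] at hu hw
  rcases hu with rfl | rfl
  · exact hno w hw.1 hw.2 huw.symm ((htw.2 w hw.1 hw.2).1 huw.symm)
  · exact hno w hw.1 hw.2 ((htw.2 w hw.1 hw.2).2 huw.symm) huw.symm

end Twins

section Agreement

variable {G H : SimpleGraph V}

theorem isTwinPair_congr {x y : V}
    (h : ∀ z, z ≠ x → z ≠ y → (G.Adj z x ↔ H.Adj z x) ∧ (G.Adj z y ↔ H.Adj z y)) :
    IsTwinPair G x y ↔ IsTwinPair H x y :=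
  and_congr_right fun _ => forall_congr' fun z => forall₂_congr fun hzx hzy => by
    rw [(h z hzx hzy).1, (h z hzx hzy).2]

theorem isTwinPair_iff_of_adj_iff {x y : V} (hx : ∀ w, G.Adj x w ↔ H.Adj x w)
    (hy : ∀ w, G.Adj y w ↔ H.Adj y w) : IsTwinPair G x y ↔ IsTwinPair H x y :=
  isTwinPair_congr fun z _ _ => by simp only [G.adj_comm z, H.adj_comm z, hx, hy, true_and]

theorem twinClass_eq_twinClass_iff_of_adj_iff {x y : V} (hx : ∀ w, G.Adj x w ↔ H.Adj x w)
    (hy : ∀ w, G.Adj y w ↔ H.Adj y w) :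
    twinClass G x = twinClass G y ↔ twinClass H x = twinClass H y := by
  rw [twinClass_eq_iff, twinClass_eq_iff]
  exact or_congr_right (isTwinPair_iff_of_adj_iff hx hy)

theorem ncard_image_twinClass_le_of_adj_iff [Finite V] {s : Set V}
    (h : ∀ x ∈ s, ∀ w, G.Adj x w ↔ H.Adj x w) :
    (twinClass G '' s).ncard ≤ (twinClass H '' s).ncard :=
  Set.ncard_image_le_ncard_image_of_eq (Set.toFinite _) fun x hx y hy =>
    (twinClass_eq_twinClass_iff_of_adj_iff (h x hx) (h y hy)).2

theorem supp_connectedComponentMk_eq_of_adj_iff {x : V}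
    (h : ∀ u ∈ (H.connectedComponentMk x).supp, ∀ w, G.Adj u w ↔ H.Adj u w) :
    (G.connectedComponentMk x).supp = (H.connectedComponentMk x).supp := by
  have hsub : (G.connectedComponentMk x).supp ⊆ (H.connectedComponentMk x).supp :=
    fun y hy => (ConnectedComponent.exact hy).symm.mem_of_forall_adj_mem
      (fun u hu w huw => ConnectedComponent.mem_supp_of_adj_mem_supp _ hu ((h u hu w).1 huw)) rfl
  refine hsub.antisymm fun y hy => (ConnectedComponent.exact hy).symm.mem_of_forall_adj_mem
    (fun u hu w huw => ConnectedComponent.mem_supp_of_adj_mem_supp _ hu ((h u (hsub hu) w).2 huw))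
    rfl

theorem isClique_congr {S : Set V} (h : ∀ u ∈ S, ∀ w, G.Adj u w ↔ H.Adj u w) :
    G.IsClique S ↔ H.IsClique S :=
  forall₂_congr fun u hu => forall₃_congr fun w _ _ => h u hu w

theorem isEllCliqueOn_congr {ℓ : ℕ} {S : Set V} (h : ∀ u ∈ S, ∀ w, G.Adj u w ↔ H.Adj u w) :
    IsEllCliqueOn ℓ G S ↔ IsEllCliqueOn ℓ H S := by
  have hind : G.induce S = H.induce S := by
    ext u w
    exact h u u.2 w
  unfold IsEllCliqueOn
  rw [hind]
  exact and_congr_right fun _ => exists_congr fun f =>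
    forall₂_congr fun u hu => forall₃_congr fun w _ _ => by rw [h u hu w]

end Agreement

section LCluster

variable {ℓ : ℕ} {H : SimpleGraph V} {x y z : V}

theorem isTwinPair_of_reachable (hxy : x ≠ y) (hr : H.Reachable x y)
    (h : ∀ z, H.Reachable x z → z ≠ x → z ≠ y → (H.Adj z x ↔ H.Adj z y)) :
    IsTwinPair H x y := by
  refine ⟨hxy, fun z hzx hzy => ?_⟩
  by_cases hz : H.Reachable x z
  · exact h z hz hzx hzy
  · exact iff_of_false (fun hadj => hz hadj.reachable.symm)
      (fun hadj => hz (hr.trans hadj.reachable.symm))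

theorem IsLCluster.isTwinPair_of_not_adj (hH : IsLCluster ℓ H) (hxy : x ≠ y)
    (hr : H.Reachable x y) (hn : ¬ H.Adj x y) : IsTwinPair H x y := by
  have mem : ∀ {z}, H.Reachable x z → z ∈ (H.connectedComponentMk x).supp :=
    fun hz => ConnectedComponent.sound hz.symm
  rcases hH (H.connectedComponentMk x) with hcl | ⟨-, f, hf⟩
  · exact absurd (hcl (mem .rfl) (mem hr) hxy) hn
  · have hfxy : f x = f y := not_not.1 fun hne => hn ((hf x (mem .rfl) y (mem hr) hxy).2 hne)
    refine isTwinPair_of_reachable hxy hr fun z hz hzx hzy => ?_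
    rw [hf z (mem hz) x (mem .rfl) hzx, hf z (mem hz) y (mem hr) hzy, hfxy]

theorem IsLCluster.adj_of_hasTrueTwin (hH : IsLCluster ℓ H) (hx : HasTrueTwin H x)
    (hz : H.Reachable x z) (hzx : z ≠ x) : H.Adj x z := by
  obtain ⟨y, htw, hadj⟩ := hx
  by_contra hn
  have hzy : z ≠ y := by
    rintro rfl
    exact hn hadj
  have hyz : H.Adj y z :=
    ((hH.isTwinPair_of_not_adj hzx.symm hz hn).2 y htw.1.symm hzy.symm).1 hadj.symm
  exact hn ((htw.2 z hzx hzy).2 hyz.symm).symm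

theorem IsLCluster.twinClass_eq_of_hasTrueTwin (hH : IsLCluster ℓ H) (hx : HasTrueTwin H x)
    (hy : HasTrueTwin H y) (hr : H.Reachable x y) : twinClass H x = twinClass H y := by
  rcases eq_or_ne x y with rfl | hxy
  · rfl
  refine twinClass_eq_iff.2 (Or.inr (isTwinPair_of_reachable hxy hr fun z hz hzx hzy => ?_))
  exact iff_of_true (hH.adj_of_hasTrueTwin hx hz hzx).symm
    (hH.adj_of_hasTrueTwin hy (hr.symm.trans hz) hzy).symm

theorem IsLCluster.ncard_image_twinClass_supp_le [Finite V] (hH : IsLCluster ℓ H) (hℓ : 1 ≤ ℓ)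
    (c : H.ConnectedComponent) : (twinClass H '' c.supp).ncard ≤ ℓ := by
  obtain ⟨f, hf⟩ : ∃ f : V → Fin ℓ, ∀ x ∈ c.supp, ∀ y ∈ c.supp, f x = f y →
      twinClass H x = twinClass H y := by
    rcases hH c with hcl | ⟨-, f, hf⟩
    · refine ⟨fun _ => ⟨0, hℓ⟩, fun x hx y hy _ => ?_⟩
      rcases eq_or_ne x y with rfl | hxy
      · rfl
      have hr := c.reachable_of_mem_supp hx hy
      refine twinClass_eq_iff.2 (Or.inr (isTwinPair_of_reachable hxy hr fun z hz hzx hzy => ?_))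
      have hzc : z ∈ c.supp := (ConnectedComponent.sound hz).symm.trans hx
      exact iff_of_true (hcl hzc hx hzx) (hcl hzc hy hzy)
    · refine ⟨f, fun x hx y hy hfxy => ?_⟩
      rcases eq_or_ne x y with rfl | hxy
      · rfl
      exact twinClass_eq_iff.2 (Or.inr (hH.isTwinPair_of_not_adj hxy
        (c.reachable_of_mem_supp hx hy) fun hadj => (hf x hx y hy hxy).1 hadj hfxy))
  calc (twinClass H '' c.supp).ncard ≤ (f '' c.supp).ncard :=
        Set.ncard_image_le_ncard_image_of_eq (Set.toFinite _) hf
    _ ≤ Nat.card (Fin ℓ) := Set.ncard_le_card _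
    _ = ℓ := Nat.card_fin ℓ

theorem IsLCluster.ncard_twinClasses_le [Finite V] (hH : IsLCluster ℓ H) (hℓ : 1 ≤ ℓ) {a : V}
    (h : ∀ x, H.Reachable a x) : (twinClasses H).ncard ≤ ℓ := by
  have hsupp : (H.connectedComponentMk a).supp = Set.univ :=
    Set.eq_univ_of_forall fun x => ConnectedComponent.sound (h x).symm
  rw [twinClasses, ← Set.image_univ, ← hsupp]
  exact hH.ncard_image_twinClass_supp_le hℓ _

theorem IsLCluster.ncard_twinClasses_le_two_mul [Finite V] (hH : IsLCluster ℓ H) (hℓ : 1 ≤ ℓ)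
    {a b : V} (h : ∀ x, H.Reachable a x ∨ H.Reachable b x) :
    (twinClasses H).ncard ≤ 2 * ℓ := by
  have hcover : (H.connectedComponentMk a).supp ∪ (H.connectedComponentMk b).supp = Set.univ :=
    Set.eq_univ_of_forall fun x =>
      (h x).imp (ConnectedComponent.sound ·.symm) (ConnectedComponent.sound ·.symm)
  rw [twinClasses, ← Set.image_univ, ← hcover, Set.image_union]
  calc _ ≤ _ := Set.ncard_union_le _ _
    _ ≤ ℓ + ℓ := add_le_add (hH.ncard_image_twinClass_supp_le hℓ _)
        (hH.ncard_image_twinClass_supp_le hℓ _)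
    _ = 2 * ℓ := (two_mul ℓ).symm

theorem IsLCluster.ncard_image_twinClass_le_one [Finite V] (hH : IsLCluster ℓ H) {s : Set V}
    {a : V} (hs : ∀ x ∈ s, HasTrueTwin H x) (h : ∀ x ∈ s, H.Reachable a x) :
    (twinClass H '' s).ncard ≤ 1 := by
  refine (Set.ncard_le_one (Set.toFinite _)).2 ?_
  rintro _ ⟨x, hx, rfl⟩ _ ⟨y, hy, rfl⟩
  exact hH.twinClass_eq_of_hasTrueTwin (hs x hx) (hs y hy) ((h x hx).symm.trans (h y hy))

theorem IsLCluster.ncard_image_twinClass_le_two [Finite V] (hH : IsLCluster ℓ H) {s : Set V}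
    {a b : V} (hs : ∀ x ∈ s, HasTrueTwin H x) (h : ∀ x ∈ s, H.Reachable a x ∨ H.Reachable b x) :
    (twinClass H '' s).ncard ≤ 2 := by
  have hsplit : s = {x ∈ s | H.Reachable a x} ∪ {x ∈ s | H.Reachable b x} :=
    Set.ext fun x => ⟨fun hx => (h x hx).imp (⟨hx, ·⟩) (⟨hx, ·⟩),
      fun hx => hx.elim And.left And.left⟩
  rw [hsplit, Set.image_union]
  calc _ ≤ _ := Set.ncard_union_le _ _
    _ ≤ 1 + 1 := add_le_add
        (hH.ncard_image_twinClass_le_one (fun x hx => hs x hx.1) fun x hx => hx.2)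
        (hH.ncard_image_twinClass_le_one (fun x hx => hs x hx.1) fun x hx => hx.2)

end LCluster

structure IsPairFlip (G H : SimpleGraph V) (a b : V) : Prop where
  adj_iff_of_ne : ∀ ⦃x⦄, x ≠ a → x ≠ b → ∀ y, G.Adj x y ↔ H.Adj x y
  adj_iff_not_adj : H.Adj a b ↔ ¬ G.Adj a b

theorem isPairFlip_editGraph {G : SimpleGraph V} {a b : V} (hab : a ≠ b) :
    IsPairFlip G (editGraph G {s(a, b)}) a b where
  adj_iff_of_ne x hxa hxb y := by
    have hne : s(x, y) ≠ s(a, b) := by simp [hxa, hxb]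
    simp [editGraph, Set.mem_symmDiff, hne, and_iff_left_of_imp G.ne_of_adj]
  adj_iff_not_adj := by
    simp [editGraph, Set.mem_symmDiff, hab]

namespace IsPairFlip

variable {ℓ : ℕ} {G H : SimpleGraph V} {a b : V}

theorem symm (hf : IsPairFlip G H a b) : IsPairFlip G H b a where
  adj_iff_of_ne _ hxb hxa := hf.adj_iff_of_ne hxa hxb
  adj_iff_not_adj := by rw [H.adj_comm, G.adj_comm]; exact hf.adj_iff_not_adj

theorem ne (hf : IsPairFlip G H a b) : a ≠ b := by
  rintro rfl
  simpa using hf.adj_iff_not_adj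

theorem reachable_or_reachable (hf : IsPairFlip G H a b)
    (hG : ∀ c : G.ConnectedComponent, ¬ (G.IsClique c.supp ∨ IsEllCliqueOn ℓ G c.supp))
    (hH : IsLCluster ℓ H) (x : V) : H.Reachable a x ∨ H.Reachable b x := by
  by_contra! hx
  have hagree : ∀ u ∈ (H.connectedComponentMk x).supp, ∀ w, G.Adj u w ↔ H.Adj u w := by
    intro u hu
    refine hf.adj_iff_of_ne ?_ ?_ <;> rintro rfl
    exacts [hx.1 (ConnectedComponent.exact hu), hx.2 (ConnectedComponent.exact hu)]
  apply hG (G.connectedComponentMk x)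
  rw [supp_connectedComponentMk_eq_of_adj_iff hagree, isClique_congr hagree,
    isEllCliqueOn_congr hagree]
  exact hH _

theorem reachable_of_hasTrueTwin (hf : IsPairFlip G H a b)
    (hG : ∀ c : G.ConnectedComponent, ¬ (G.IsClique c.supp ∨ IsEllCliqueOn ℓ G c.supp))
    (ha : HasTrueTwin G a) : H.Reachable a b := by
  obtain ⟨y, hay, hadj⟩ := ha
  by_cases hab : G.Adj a b
  swap
  · exact (hf.adj_iff_not_adj.2 hab).reachable
  obtain ⟨z, hza, hzb, hz_a, hz_b⟩ : ∃ z, z ≠ a ∧ z ≠ b ∧ G.Adj z a ∧ G.Adj z b := by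
    rcases eq_or_ne y b with rfl | hyb
    · exact hay.exists_common_adj hadj fun hcl => hG _ (Or.inl hcl)
    · exact ⟨y, hay.1.symm, hyb, hadj.symm, ((hay.2 b hab.ne.symm hyb.symm).1 hab.symm).symm⟩
  exact ((hf.adj_iff_of_ne hza hzb a).1 hz_a).symm.reachable.trans
    ((hf.adj_iff_of_ne hza hzb b).1 hz_b).reachable

theorem twinClass_eq_of_hasTrueTwin (hf : IsPairFlip G H a b) (hH : IsLCluster ℓ H)
    (ha : HasTrueTwin G a) (hb : HasTrueTwin G b) : twinClass G a = twinClass G b := by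
  obtain ⟨x, hax, hadj_x⟩ := ha
  obtain ⟨y, hby, hadj_y⟩ := hb
  refine twinClass_eq_iff.2 (or_iff_not_imp_left.2 fun hba => ?_)
  by_contra hnab
  have hxb : x ≠ b := by
    rintro rfl
    exact hnab hax
  have hya : y ≠ a := by
    rintro rfl
    exact hnab hby.symm
  have hxy : x ≠ y := by
    rintro rfl
    exact hnab (hax.trans hby.symm (Ne.symm hba))
  have hx := hf.adj_iff_of_ne hax.1.symm hxb
  have hy := hf.adj_iff_of_ne hya hby.1.symm
  by_cases hab : G.Adj a b
  · -- `a`, `b` are non-adjacent in `H` with the common neighbour `x`, so they are twins of `H`,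
    -- and flipping `ab` does not change whether `a`, `b` are twins
    have hbx : G.Adj b x := (hax.2 b hba hxb.symm).1 hab.symm
    have hr : H.Reachable a b :=
      ((hx a).1 hadj_x.symm).symm.reachable.trans ((hx b).1 hbx.symm).reachable
    have htwH := hH.isTwinPair_of_not_adj hab.ne hr fun h => hf.adj_iff_not_adj.1 h hab
    exact hnab ((isTwinPair_congr fun z hza hzb =>
      ⟨hf.adj_iff_of_ne hza hzb a, hf.adj_iff_of_ne hza hzb b⟩).2 htwH)
  · -- `x a b` is an induced path of `H`, so `x` is an `H`-twin of `b`, hence adjacent to `y`;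
    -- but `y` is a `G`-twin of `b`, which is not adjacent to `x`
    have hbx : ¬ G.Adj b x := fun h => hab ((hax.2 b hba hxb.symm).2 h).symm
    have hr : H.Reachable x b :=
      ((hx a).1 hadj_x.symm).reachable.trans (hf.adj_iff_not_adj.2 hab).reachable
    have htwH : IsTwinPair H x b :=
      hH.isTwinPair_of_not_adj hxb hr fun h => hbx ((hx b).2 h).symm
    have hyx : G.Adj y x := (hy x).2 ((htwH.2 y hxy.symm hby.1.symm).2 ((hy b).1 hadj_y.symm))
    exact hbx ((hby.2 x hxb hxy).2 hyx.symm).symm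

theorem ncard_image_twinClass_le [Finite V] (hf : IsPairFlip G H a b) :
    (twinClass G '' {x | x ≠ a ∧ x ≠ b}).ncard ≤ (twinClasses H).ncard :=
  (ncard_image_twinClass_le_of_adj_iff fun _ hx => hf.adj_iff_of_ne hx.1 hx.2).trans
    (Set.ncard_le_ncard (Set.image_subset_range _ _))

theorem qcount_le [Finite V] (hf : IsPairFlip G H a b)
    (hG : ∀ c : G.ConnectedComponent, ¬ (G.IsClique c.supp ∨ IsEllCliqueOn ℓ G c.supp))
    (hH : IsLCluster ℓ H) (hℓ : 1 ≤ ℓ) : Qcount G ≤ 2 * ℓ + 2 := by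
  have hsub : twinClasses G ⊆
      twinClass G '' {x | x ≠ a ∧ x ≠ b} ∪ {twinClass G a, twinClass G b} := by
    rintro _ ⟨x, rfl⟩
    by_cases hxa : x = a
    · exact Or.inr (Or.inl (hxa ▸ rfl))
    by_cases hxb : x = b
    · exact Or.inr (Or.inr (hxb ▸ rfl))
    exact Or.inl ⟨x, ⟨hxa, hxb⟩, rfl⟩
  calc Qcount G
      ≤ (twinClass G '' {x | x ≠ a ∧ x ≠ b}).ncard +
          ({twinClass G a, twinClass G b} : Set (Set V)).ncard :=
        (Set.ncard_le_ncard hsub (Set.toFinite _)).trans (Set.ncard_union_le _ _)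
    _ ≤ 2 * ℓ + 2 := add_le_add
        (hf.ncard_image_twinClass_le.trans
          (hH.ncard_twinClasses_le_two_mul hℓ (hf.reachable_or_reachable hG hH)))
        ((Set.ncard_insert_le _ _).trans (by simp))

theorem pcount_le [Finite V] (hf : IsPairFlip G H a b)
    (hG : ∀ c : G.ConnectedComponent, ¬ (G.IsClique c.supp ∨ IsEllCliqueOn ℓ G c.supp))
    (hH : IsLCluster ℓ H) (hℓ : 1 ≤ ℓ) : Pcount G ≤ 2 * ℓ := by
  set P := {C ∈ twinClasses G | 2 ≤ C.ncard ∧ ∀ x ∈ C, ∀ y ∈ C, x ≠ y → ¬ G.Adj x y}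
  have hsub : P ⊆ twinClass G '' {x | x ≠ a ∧ x ≠ b} ∪ P ∩ {{a, b}} := by
    intro C hC
    by_cases hab : C ⊆ {a, b}
    · refine Or.inr ⟨hC, Set.eq_of_subset_of_ncard_le hab ?_⟩
      exact (Set.ncard_insert_le _ _).trans (by simpa using hC.2.1)
    · obtain ⟨x, hxC, hx⟩ := Set.not_subset.1 hab
      simp only [Set.mem_insert_iff, Set.mem_singleton_iff, not_or] at hx
      exact Or.inl ⟨x, hx, (eq_twinClass_of_mem hC.1 hxC).symm⟩
  refine (Set.ncard_le_ncard hsub (Set.toFinite _)).trans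
    ((Set.ncard_union_le _ _).trans ?_)
  rcases (P ∩ {{a, b}}).eq_empty_or_nonempty with h | ⟨_, hP, rfl⟩
  · rw [h, Set.ncard_empty, add_zero]
    exact hf.ncard_image_twinClass_le.trans
      (hH.ncard_twinClasses_le_two_mul hℓ (hf.reachable_or_reachable hG hH))
  · -- `{a, b}` is a class of false twins, so the flip joins `a` and `b` in `H`
    have hHab : H.Adj a b := hf.adj_iff_not_adj.2 (hP.2.2 a (by simp) b (by simp) hf.ne)
    have hall : ∀ x, H.Reachable a x :=
      fun x => (hf.reachable_or_reachable hG hH x).elim id hHab.reachable.trans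
    have hone : (P ∩ {{a, b}}).ncard ≤ 1 :=
      (Set.ncard_inter_le_ncard_right _ _).trans (Set.ncard_singleton _).le
    calc _ ≤ ℓ + 1 :=
          add_le_add (hf.ncard_image_twinClass_le.trans (hH.ncard_twinClasses_le hℓ hall)) hone
      _ ≤ 2 * ℓ := by omega

theorem trueTwinClasses_subset (hf : IsPairFlip G H a b) :
    {C ∈ twinClasses G | 2 ≤ C.ncard ∧ ∀ x ∈ C, ∀ y ∈ C, x ≠ y → G.Adj x y} ⊆
      twinClass G '' {v | (v = a ∨ v = b) ∧ HasTrueTwin G v} ∪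
        twinClass G '' {x | x ≠ a ∧ x ≠ b ∧ HasTrueTwin H x} := by
  rintro C ⟨hC, h2, hadj⟩
  by_cases hab : a ∈ C ∨ b ∈ C
  · obtain ⟨v, hvC, hv⟩ : ∃ v ∈ C, v = a ∨ v = b :=
      hab.elim (⟨a, ·, .inl rfl⟩) (⟨b, ·, .inr rfl⟩)
    exact Or.inl ⟨v, ⟨hv, hasTrueTwin_of_mem hC h2 hadj hvC⟩, (eq_twinClass_of_mem hC hvC).symm⟩
  rw [not_or] at hab
  have hoff : ∀ v ∈ C, v ≠ a ∧ v ≠ b :=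
    fun v hv => ⟨ne_of_mem_of_not_mem hv hab.1, ne_of_mem_of_not_mem hv hab.2⟩
  obtain ⟨x, hxC⟩ := Set.nonempty_of_ncard_ne_zero (by omega : C.ncard ≠ 0)
  obtain ⟨y, hxy, hxy'⟩ := hasTrueTwin_of_mem hC h2 hadj hxC
  have hyC : y ∈ C := (eq_twinClass_of_mem hC hxC).symm ▸ Or.inr hxy
  have hx := hf.adj_iff_of_ne (hoff x hxC).1 (hoff x hxC).2
  have hy := hf.adj_iff_of_ne (hoff y hyC).1 (hoff y hyC).2
  exact Or.inr ⟨x, ⟨(hoff x hxC).1, (hoff x hxC).2, y, (isTwinPair_iff_of_adj_iff hx hy).1 hxy,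
    (hx y).1 hxy'⟩, (eq_twinClass_of_mem hC hxC).symm⟩

theorem ncard_image_twinClass_hasTrueTwin_le_one [Finite V] (hf : IsPairFlip G H a b)
    (hH : IsLCluster ℓ H) :
    (twinClass G '' {v | (v = a ∨ v = b) ∧ HasTrueTwin G v}).ncard ≤ 1 := by
  refine (Set.ncard_le_one (Set.toFinite _)).2 ?_
  rintro _ ⟨v, ⟨hv, htv⟩, rfl⟩ _ ⟨w, ⟨hw, htw⟩, rfl⟩
  rcases hv with rfl | rfl <;> rcases hw with rfl | rfl
  exacts [rfl, hf.twinClass_eq_of_hasTrueTwin hH htv htw,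
    (hf.twinClass_eq_of_hasTrueTwin hH htw htv).symm, rfl]

theorem scount_le [Finite V] (hf : IsPairFlip G H a b)
    (hG : ∀ c : G.ConnectedComponent, ¬ (G.IsClique c.supp ∨ IsEllCliqueOn ℓ G c.supp))
    (hH : IsLCluster ℓ H) : Scount G ≤ 2 := by
  refine (Set.ncard_le_ncard hf.trueTwinClasses_subset (Set.toFinite _)).trans
    ((Set.ncard_union_le _ _).trans ?_)
  set R := {v | (v = a ∨ v = b) ∧ HasTrueTwin G v}
  set T := {x | x ≠ a ∧ x ≠ b ∧ HasTrueTwin H x}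
  have hT : (twinClass G '' T).ncard ≤ (twinClass H '' T).ncard :=
    ncard_image_twinClass_le_of_adj_iff fun _ hx => hf.adj_iff_of_ne hx.1 hx.2.1
  rcases R.eq_empty_or_nonempty with h | ⟨v, hv, htv⟩
  · rw [h, Set.image_empty, Set.ncard_empty, zero_add]
    exact hT.trans (hH.ncard_image_twinClass_le_two (fun _ hx => hx.2.2)
      fun x _ => hf.reachable_or_reachable hG hH x)
  · have hab : H.Reachable a b := by
      rcases hv with rfl | rfl
      exacts [hf.reachable_of_hasTrueTwin hG htv, (hf.symm.reachable_of_hasTrueTwin hG htv).symm]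
    have hall : ∀ x, H.Reachable a x :=
      fun x => (hf.reachable_or_reachable hG hH x).elim id hab.trans
    exact add_le_add (hf.ncard_image_twinClass_hasTrueTwin_le_one hH)
      (hT.trans (hH.ncard_image_twinClass_le_one (fun _ hx => hx.2.2) fun x _ => hall x))

end IsPairFlip

/-- Lemma 5: if `G` has no clique or `ℓ`-clique component and one edge edition turns it
into an `L`-cluster graph, then `Q(G) ≤ 2ℓ+2`, `P(G) ≤ 2ℓ` and `S(G) ≤ 2`. -/
theorem one_edition_kernel_bounds [Fintype V] (ℓ : ℕ) (hℓ : 2 ≤ ℓ) (G : SimpleGraph V)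
    (hG : ∀ c : G.ConnectedComponent,
      ¬ (G.IsClique c.supp ∨ IsEllCliqueOn ℓ G c.supp))
    (hex : ∃ F : Finset (Sym2 V), IsEditionSet F ∧ F.card = 1 ∧
      IsLCluster ℓ (editGraph G F)) :
    Qcount G ≤ 2 * ℓ + 2 ∧ Pcount G ≤ 2 * ℓ ∧ Scount G ≤ 2 := by
  obtain ⟨F, hF, hF1, hL⟩ := hex
  obtain ⟨e, rfl⟩ := Finset.card_eq_one.1 hF1
  induction e using Sym2.ind with
  | _ a b =>
    have hf := isPairFlip_editGraph (G := G) fun hab =>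
      hF _ (Finset.mem_singleton_self _) (Sym2.mk_isDiag_iff.2 hab)
    exact ⟨hf.qcount_le hG hL (by omega), hf.pcount_le hG hL (by omega), hf.scount_le hG hL⟩
end
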